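/- arXiv:1401.4739 — 2 statements merged into one kernel-verified Lean document; each statement's English description precedes it below -/
import Mathlib

section
/- In the setting of the graph G' from the cross-edges configuration: if two edges of E' = {{a,v},{a,w},{b,u},{b,w},{c,u},{c,v}} sharing a common white vertex s ∈ {u,v,w} are present in G (i.e., both {b,u} and {c,u}, or both {a,v} and {c,v}, or both {a,w} and {b,w}), then the vertices x,y,z,a,b,c together with s induce a subgraph isomorphic to G_{III_1}, with s as the white vertex adjacent to all of a, b, c. -/
/-!
Since `s` is one of `u, v, w`, the seven vertices `a, b, c, x, y, z, s` are distinct, and each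
colour class is independent. Across the classes, `x, y, z` see exactly `a, b, c` respectively,
while `s` sees all three: one of `a u`, `b v`, `c w` is an edge of the configuration and the
hypothesis supplies the other two. This is the biadjacency matrix of `G_III_1`, so
`a, b, c, x, y, z, s ↦ p, q, r, p', q', r', t` is an isomorphism onto the induced subgraph.
-/

open SimpleGraph Function

def graphOf {m n : ℕ} (M : Fin m → Fin n → Bool) : SimpleGraph (Fin m ⊕ Fin n) :=
  SimpleGraph.fromRel (fun p q => ∃ i j, p = Sum.inl i ∧ q = Sum.inr j ∧ M i j = true)

/-- The cross-edges configuration: a bipartite graph `G` containing black vertices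
`a,b,c,d` and white vertices `x,y,z,u,v,w` (all ten distinct), with the edges
`{x,a},{y,b},{z,c},{a,u},{b,v},{c,w},{u,d},{v,d},{w,d}` present, the pairs
`{x,b},{x,c},{x,d},{y,a},{y,c},{y,d},{z,a},{z,b},{z,d}` absent, and black vertices
(resp. white vertices) pairwise non-adjacent; the only undetermined pairs are those in
`E' = {{a,v},{a,w},{b,u},{b,w},{c,u},{c,v}}`. -/
structure CrossConfig {V : Type*} (G : SimpleGraph V) where
  a : V
  b : V
  c : V
  d : V
  x : V
  y : V
  z : V
  u : V
  v : V
  w : V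
  distinct : List.Pairwise (· ≠ ·) [a, b, c, d, x, y, z, u, v, w]
  blackIndep : ∀ p ∈ ({a, b, c, d} : Set V), ∀ q ∈ ({a, b, c, d} : Set V), ¬G.Adj p q
  whiteIndep : ∀ p ∈ ({x, y, z, u, v, w} : Set V), ∀ q ∈ ({x, y, z, u, v, w} : Set V),
    ¬G.Adj p q
  exa : G.Adj x a
  eyb : G.Adj y b
  ezc : G.Adj z c
  eau : G.Adj a u
  ebv : G.Adj b v
  ecw : G.Adj c w
  eud : G.Adj u d
  evd : G.Adj v d
  ewd : G.Adj w d
  nxb : ¬G.Adj x b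
  nxc : ¬G.Adj x c
  nxd : ¬G.Adj x d
  nya : ¬G.Adj y a
  nyc : ¬G.Adj y c
  nyd : ¬G.Adj y d
  nza : ¬G.Adj z a
  nzb : ¬G.Adj z b
  nzd : ¬G.Adj z d


/-- Tucker's forbidden subgraph `G_III_1`: black vertices `p,q,r` (rows `0,1,2`) and
white vertices `p',q',r',t` (columns `0,1,2,3`), with edge set exactly
`{p,t},{q,t},{r,t},{p,p'},{q,q'},{r,r'}`. -/
def GIII1 : SimpleGraph (Fin 3 ⊕ Fin 4) :=
  graphOf (fun i j => (!![true,false,false,true;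
                          false,true,false,true;
                          false,false,true,true] : Matrix (Fin 3) (Fin 4) Bool) i j)

theorem injective_sumElim_of_nodup {α : Type*} {m n : ℕ} {f : Fin m → α} {g : Fin n → α}
    (h : (List.ofFn f ++ List.ofFn g).Nodup) : Injective (Sum.elim f g) := by
  obtain ⟨hf, hg, hfg⟩ := List.nodup_append.1 h
  refine (List.nodup_ofFn.1 hf).sumElim (List.nodup_ofFn.1 hg) fun i j hij => ?_
  exact hfg _ ((List.mem_ofFn' f _).2 ⟨i, rfl⟩) _ ((List.mem_ofFn' g _).2 ⟨j, rfl⟩) hij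

section graphOf

variable {m n : ℕ} (M : Fin m → Fin n → Bool)

@[simp]
theorem graphOf_adj_inl_inr (i : Fin m) (j : Fin n) :
    (graphOf M).Adj (.inl i) (.inr j) ↔ M i j = true := by
  simp [graphOf]

@[simp]
theorem graphOf_adj_inr_inl (i : Fin m) (j : Fin n) :
    (graphOf M).Adj (.inr j) (.inl i) ↔ M i j = true := by
  simp [graphOf]

@[simp]
theorem graphOf_not_adj_inl_inl (i j : Fin m) : ¬(graphOf M).Adj (.inl i) (.inl j) := by
  simp [graphOf]

@[simp]
theorem graphOf_not_adj_inr_inr (i j : Fin n) : ¬(graphOf M).Adj (.inr i) (.inr j) := by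
  simp [graphOf]

variable {V : Type*} {G : SimpleGraph V}

def graphOfEmbedding (black : Fin m → V) (white : Fin n → V)
    (hinj : Injective (Sum.elim black white))
    (hblack : ∀ i j, ¬G.Adj (black i) (black j)) (hwhite : ∀ i j, ¬G.Adj (white i) (white j))
    (hcross : ∀ i j, G.Adj (black i) (white j) ↔ M i j = true) : graphOf M ↪g G where
  toFun := Sum.elim black white
  inj' := hinj
  map_rel_iff' {p q} := by
    rcases p with i | i <;> rcases q with j | j <;>
      simp [hblack, hwhite, hcross, G.adj_comm (white _)]

end graphOf

theorem SimpleGraph.Embedding.exists_iso_induce {V W : Type*} {G : SimpleGraph V}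
    {H : SimpleGraph W} (f : H ↪g G) {S : Set V} (hS : Set.range f = S) :
    ∃ e : G.induce S ≃g H, ∀ p (hp : f p ∈ S), e ⟨f p, hp⟩ = p := by
  subst hS
  exact ⟨f.isoInduceRange.symm, fun p _ => f.isoInduceRange.symm_apply_eq.2 rfl⟩

namespace CrossConfig

variable {V : Type*} {G : SimpleGraph V} (C : CrossConfig G) {s : V}

theorem nodup_black_white (hs : s ∈ ({C.u, C.v, C.w} : Set V)) :
    [C.a, C.b, C.c, C.x, C.y, C.z, s].Nodup := by
  refine C.distinct.sublist ?_
  rcases hs with rfl | rfl | rfl <;> simp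

theorem adj_black_white_iff (ha : G.Adj C.a s) (hb : G.Adj C.b s) (hc : G.Adj C.c s)
    (i : Fin 3) (j : Fin 4) :
    G.Adj (![C.a, C.b, C.c] i) (![C.x, C.y, C.z, s] j) ↔
      (!![true,false,false,true;
          false,true,false,true;
          false,false,true,true] : Matrix (Fin 3) (Fin 4) Bool) i j = true := by
  fin_cases i <;> fin_cases j <;>
    simp [ha, hb, hc, G.adj_comm _ C.x, G.adj_comm _ C.y, G.adj_comm _ C.z,
      C.exa, C.eyb, C.ezc, C.nxb, C.nxc, C.nya, C.nyc, C.nza, C.nzb]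

theorem exists_iso_GIII1 (hs : s ∈ ({C.u, C.v, C.w} : Set V))
    (ha : G.Adj C.a s) (hb : G.Adj C.b s) (hc : G.Adj C.c s) :
    ∃ f : (G.induce {C.x, C.y, C.z, C.a, C.b, C.c, s}) ≃g GIII1,
      f ⟨s, by simp⟩ = Sum.inr 3 := by
  have hsWhite : s ∈ ({C.x, C.y, C.z, C.u, C.v, C.w} : Set V) := by
    rcases hs with rfl | rfl | rfl <;> simp
  let e : GIII1 ↪g G := graphOfEmbedding _ ![C.a, C.b, C.c] ![C.x, C.y, C.z, s]
    (injective_sumElim_of_nodup (C.nodup_black_white hs))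
    (fun i j => C.blackIndep _ (by fin_cases i <;> simp) _ (by fin_cases j <;> simp))
    (fun i j => C.whiteIndep _ (by fin_cases i <;> simp [hsWhite])
      _ (by fin_cases j <;> simp [hsWhite]))
    (C.adj_black_white_iff ha hb hc)
  have hrange : Set.range (Sum.elim ![C.a, C.b, C.c] ![C.x, C.y, C.z, s]) =
      {C.x, C.y, C.z, C.a, C.b, C.c, s} := by
    ext q
    simp [Set.Sum.elim_range, Matrix.range_cons]
    tauto
  obtain ⟨f, hf⟩ := e.exists_iso_induce hrange
  exact ⟨f, hf (.inr 3) _⟩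

end CrossConfig

/-- If two pairs of `E'` sharing a common white vertex `s ∈ {u,v,w}` are both edges of
`G` (i.e. both `{b,u}` and `{c,u}`, or both `{a,v}` and `{c,v}`, or both `{a,w}` and
`{b,w}`), then the vertices `x,y,z,a,b,c` together with `s` induce a subgraph
isomorphic to `G_III_1`, with `s` as the white vertex (column `3`) adjacent to all of
`a,b,c`. -/
theorem crossConfig_joined_right_GIII1 {V : Type*} {G : SimpleGraph V}
    (C : CrossConfig G) (s : V)
    (h : (s = C.u ∧ G.Adj C.b C.u ∧ G.Adj C.c C.u) ∨
         (s = C.v ∧ G.Adj C.a C.v ∧ G.Adj C.c C.v) ∨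
         (s = C.w ∧ G.Adj C.a C.w ∧ G.Adj C.b C.w)) :
    ∃ f : (G.induce {C.x, C.y, C.z, C.a, C.b, C.c, s}) ≃g GIII1,
      f ⟨s, by simp⟩ = Sum.inr 3 := by
  rcases h with ⟨rfl, hb, hc⟩ | ⟨rfl, ha, hc⟩ | ⟨rfl, ha, hb⟩
  · exact C.exists_iso_GIII1 (by simp) C.eau hb hc
  · exact C.exists_iso_GIII1 (by simp) ha C.ebv hc
  · exact C.exists_iso_GIII1 (by simp) ha hb C.ecw
end

section
/- In the setting of the graph G' from the cross-edges configuration: if the set of pairs of E' = {{a,v},{a,w},{b,u},{b,w},{c,u},{c,v}} that are edges of G is exactly {{a,v},{b,w},{c,u}} or exactly {{a,w},{b,u},{c,v}} (three pairwise vertex-disjoint edges), then the six vertices a,b,c,u,v,w induce a chordless cycle of length 6. -/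
open SimpleGraph

/-- The chordless cycle of length `6`, as the bipartite graph of the `3 × 3` circulant
matrix with ones in positions `(i, i)` and `(i, i+1)`. -/
def C6 : SimpleGraph (Fin 3 ⊕ Fin 3) :=
  graphOf (fun i j : Fin 3 => decide (j = i ∨ j = i + 1))

/-!
In the first pattern the neighbourhoods of `a, b, c` among `u, v, w` are `{u, v}, {v, w}, {w, u}`;
in the second those of `b, c, a` are. Listing the black vertices in that order against `u, v, w`
turns the adjacency matrix into the circulant defining `C6`, and there are no chords because both
colour classes are independent.
-/

namespace graphOf

variable {m n : ℕ} {M : Fin m → Fin n → Bool}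

@[simp] lemma adj_inl_inl (i j : Fin m) : ¬(graphOf M).Adj (.inl i) (.inl j) := by
  simp [graphOf]

@[simp] lemma adj_inr_inr (i j : Fin n) : ¬(graphOf M).Adj (.inr i) (.inr j) := by
  simp [graphOf]

@[simp] lemma adj_inl_inr (i : Fin m) (j : Fin n) :
    (graphOf M).Adj (.inl i) (.inr j) ↔ M i j = true := by
  simp [graphOf]

@[simp] lemma adj_inr_inl (i : Fin m) (j : Fin n) :
    (graphOf M).Adj (.inr j) (.inl i) ↔ M i j = true := by
  simp [graphOf]

def embedding {V : Type*} {G : SimpleGraph V} (A : Fin m → V) (B : Fin n → V)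
    (hinj : Function.Injective (Sum.elim A B)) (hA : ∀ i j, ¬G.Adj (A i) (A j))
    (hB : ∀ i j, ¬G.Adj (B i) (B j)) (hAB : ∀ i j, G.Adj (A i) (B j) ↔ M i j = true) :
    graphOf M ↪g G where
  toFun := Sum.elim A B
  inj' := hinj
  map_rel_iff' := by
    rintro (i | i) (j | j) <;> simp [hA, hB, hAB, G.adj_comm (B _)]

end graphOf

lemma SimpleGraph.Embedding.nonempty_induce_iso {V W : Type*} {G : SimpleGraph V}
    {H : SimpleGraph W} (f : H ↪g G) {s : Set V} (hs : Set.range f = s) :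
    Nonempty (G.induce s ≃g H) :=
  hs ▸ ⟨f.isoInduceRange.symm⟩

namespace CrossConfig

variable {V : Type*} {G : SimpleGraph V} (C : CrossConfig G)

def black : Fin 3 → V := ![C.a, C.b, C.c]

def white : Fin 3 → V := ![C.u, C.v, C.w]

lemma injective_sumElim_black_white : Function.Injective (Sum.elim C.black C.white) := by
  have hL := List.nodup_iff_injective_get.mp C.distinct
  have hfactor : Sum.elim C.black C.white =
      [C.a, C.b, C.c, C.d, C.x, C.y, C.z, C.u, C.v, C.w].get ∘
        Sum.elim ![0, 1, 2] ![7, 8, 9] := by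
    funext p
    rcases p with i | i <;> fin_cases i <;> rfl
  have hindex : Function.Injective (Sum.elim ![(0 : Fin 10), 1, 2] ![7, 8, 9]) := by decide
  rw [hfactor]
  exact hL.comp hindex

lemma not_adj_black (i j : Fin 3) : ¬G.Adj (C.black i) (C.black j) :=
  C.blackIndep _ (by fin_cases i <;> simp [black]) _ (by fin_cases j <;> simp [black])

lemma not_adj_white (i j : Fin 3) : ¬G.Adj (C.white i) (C.white j) :=
  C.whiteIndep _ (by fin_cases i <;> simp [white]) _ (by fin_cases j <;> simp [white])

lemma range_sumElim_black_white :
    Set.range (Sum.elim C.black C.white) = {C.a, C.b, C.c, C.u, C.v, C.w} := by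
  ext p
  simp only [Set.Sum.elim_range, black, white, Matrix.range_cons, Matrix.range_empty,
    Set.union_empty, Set.mem_union, Set.mem_insert_iff, Set.mem_singleton_iff]
  tauto

theorem nonempty_induce_iso_C6 (σ : Equiv.Perm (Fin 3))
    (hadj : ∀ i j, G.Adj (C.black (σ i)) (C.white j) ↔ j = i ∨ j = i + 1) :
    Nonempty (G.induce {C.a, C.b, C.c, C.u, C.v, C.w} ≃g C6) := by
  have hfactor : Sum.elim (C.black ∘ σ) C.white = Sum.elim C.black C.white ∘ Sum.map σ id :=
    (Sum.elim_comp_map ..).symm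
  refine (graphOf.embedding (C.black ∘ σ) C.white ?_ (fun i j => C.not_adj_black _ _)
    C.not_adj_white (by simpa using hadj)).nonempty_induce_iso ?_
  · rw [hfactor]
    exact C.injective_sumElim_black_white.comp
      (Sum.map_injective.2 ⟨σ.injective, Function.injective_id⟩)
  · change Set.range (Sum.elim (C.black ∘ σ) C.white) = _
    rw [hfactor, (Sum.map_surjective.2 ⟨σ.surjective, Function.surjective_id⟩).range_comp,
      C.range_sumElim_black_white]

end CrossConfig

/-- If the set of pairs of `E' = {{a,v},{a,w},{b,u},{b,w},{c,u},{c,v}}` that are edges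
of `G` is exactly `{{a,v},{b,w},{c,u}}` or exactly `{{a,w},{b,u},{c,v}}` (three
pairwise vertex-disjoint edges), then the six vertices `a,b,c,u,v,w` induce a
chordless cycle of length `6`. -/
theorem crossConfig_three_disjoint_edges_C6 {V : Type*} {G : SimpleGraph V}
    (C : CrossConfig G)
    (h : (G.Adj C.a C.v ∧ G.Adj C.b C.w ∧ G.Adj C.c C.u ∧
          ¬G.Adj C.a C.w ∧ ¬G.Adj C.b C.u ∧ ¬G.Adj C.c C.v) ∨
         (G.Adj C.a C.w ∧ G.Adj C.b C.u ∧ G.Adj C.c C.v ∧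
          ¬G.Adj C.a C.v ∧ ¬G.Adj C.b C.w ∧ ¬G.Adj C.c C.u)) :
    Nonempty ((G.induce {C.a, C.b, C.c, C.u, C.v, C.w}) ≃g C6) := by
  rcases h with ⟨hav, hbw, hcu, haw, hbu, hcv⟩ | ⟨haw, hbu, hcv, hav, hbw, hcu⟩
  · refine C.nonempty_induce_iso_C6 1 fun i j => ?_
    fin_cases i <;> fin_cases j <;>
      simp [CrossConfig.black, CrossConfig.white, C.eau, C.ebv, C.ecw, *]
  · refine C.nonempty_induce_iso_C6 (Equiv.addRight 1) fun i j => ?_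
    fin_cases i <;> fin_cases j <;>
      simp [CrossConfig.black, CrossConfig.white, C.eau, C.ebv, C.ecw, *]
end
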